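/- Let Q be an I×I real matrix, p ∈ ℝ^I, and s range over binary vectors in {0,1}^I with Σᵢ sᵢ = N (N ≥ 1 fixed). Let Z = −(Q + Qᵀ) with minimal eigenvalue λ_Z. Then for η > 0 and any such s with sᵀQs > 0: (sᵀp)/(sᵀQs) ≤ η if and only if sᵀ(Z − λ_Z I)s + (2/η)sᵀp + λ_Z·N ≤ 0, and the left-hand side of the latter inequality is a convex function of s ∈ ℝ^I (for fixed η). -/

import Mathlib

/-!
For binary `s` with `∑ sᵢ = N` we have `sᵀs = N` and `sᵀ(-(Q + Qᵀ))s = -2 sᵀQs`, so the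
shifted quadratic inequality is `(2/η) sᵀp ≤ 2 sᵀQs`, i.e. the ratio inequality multiplied by the
positive number `2 sᵀQs / η`. Convexity holds because `Z - λ_Z I` is unitarily similar to the
diagonal matrix of the nonnegative numbers `λᵢ - λ_Z`, hence positive semidefinite.
-/

open Matrix Set

namespace Matrix

variable {n : Type*} [Fintype n]

open scoped ComplexOrder in
lemma IsHermitian.posSemidef_sub_smul_one_iff [DecidableEq n] {𝕜 : Type*} [RCLike 𝕜]
    {A : Matrix n n 𝕜} (hA : A.IsHermitian) (c : ℝ) :
    (A - c • (1 : Matrix n n 𝕜)).PosSemidef ↔ ∀ i, c ≤ hA.eigenvalues i := by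
  have hdiag : diagonal (fun i ↦ ((hA.eigenvalues i - c : ℝ) : 𝕜)) =
      diagonal (RCLike.ofReal ∘ hA.eigenvalues) - c • 1 := by
    ext i j
    rcases eq_or_ne i j with rfl | h <;> simp [*, Algebra.algebraMap_eq_smul_one, sub_smul]
  have hconj : A - c • (1 : Matrix n n 𝕜) = Unitary.conjStarAlgAut 𝕜 _ hA.eigenvectorUnitary
      (diagonal fun i ↦ ((hA.eigenvalues i - c : ℝ) : 𝕜)) := by
    conv_lhs => rw [hA.spectral_theorem]
    rw [hdiag, map_sub, Unitary.conjStarAlgAut_apply (x := c • 1)]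
    simp
  rw [hconj, Unitary.conjStarAlgAut_apply]
  simp [Unitary.isUnit_coe.posSemidef_star_right_conjugate_iff, posSemidef_diagonal_iff]

lemma PosSemidef.convexOn_dotProduct_mulVec {M : Matrix n n ℝ} (hM : M.PosSemidef) :
    ConvexOn ℝ univ fun x ↦ x ⬝ᵥ M *ᵥ x := by
  refine ⟨convex_univ, fun x _ y _ a b ha hb hab ↦ ?_⟩
  have hgap : a * (x ⬝ᵥ M *ᵥ x) + b * (y ⬝ᵥ M *ᵥ y) - (a • x + b • y) ⬝ᵥ M *ᵥ (a • x + b • y) =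
      a * b * ((x - y) ⬝ᵥ M *ᵥ (x - y)) := by
    obtain rfl : a = 1 - b := eq_sub_of_add_eq hab
    simp only [mulVec_add, mulVec_sub, mulVec_smul, dotProduct_add, add_dotProduct,
      dotProduct_sub, sub_dotProduct, dotProduct_smul, smul_dotProduct, smul_eq_mul]
    ring
  have hq : 0 ≤ (x - y) ⬝ᵥ M *ᵥ (x - y) := by simpa using hM.dotProduct_mulVec_nonneg (x - y)
  simp only [smul_eq_mul]
  linarith [mul_nonneg (mul_nonneg ha hb) hq]

lemma dotProduct_self_eq_sum_of_forall_eq_zero_or_eq_one {α : Type*} [NonAssocSemiring α]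
    {s : n → α} (hs : ∀ i, s i = 0 ∨ s i = 1) : s ⬝ᵥ s = ∑ i, s i :=
  Finset.sum_congr rfl fun i _ ↦ by rcases hs i with h | h <;> simp [h]

lemma dotProduct_neg_add_transpose_mulVec {α : Type*} [CommRing α] (Q : Matrix n n α)
    (s : n → α) : s ⬝ᵥ (-(Q + Qᵀ)) *ᵥ s = -2 * (s ⬝ᵥ Q *ᵥ s) := by
  rw [neg_mulVec, add_mulVec, dotProduct_neg, dotProduct_add, dotProduct_transpose_mulVec]
  ring

lemma div_dotProduct_mulVec_le_iff [DecidableEq n] {Q : Matrix n n ℝ} {p s : n → ℝ}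
    (hs : ∀ i, s i = 0 ∨ s i = 1) (hQs : 0 < s ⬝ᵥ Q *ᵥ s) (c : ℝ) {η : ℝ} (hη : 0 < η) :
    (s ⬝ᵥ p) / (s ⬝ᵥ Q *ᵥ s) ≤ η ↔
      s ⬝ᵥ ((-(Q + Qᵀ) - c • 1) *ᵥ s) + 2 / η * (s ⬝ᵥ p) + c * ∑ i, s i ≤ 0 := by
  have hquad : s ⬝ᵥ ((-(Q + Qᵀ) - c • 1) *ᵥ s) = -2 * (s ⬝ᵥ Q *ᵥ s) - c * ∑ i, s i := by
    rw [sub_mulVec, dotProduct_sub, dotProduct_neg_add_transpose_mulVec, smul_mulVec,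
      one_mulVec, dotProduct_smul, dotProduct_self_eq_sum_of_forall_eq_zero_or_eq_one hs,
      smul_eq_mul]
  rw [hquad, div_le_iff₀ hQs, ← mul_le_mul_iff_right₀ (div_pos two_pos hη),
    show 2 / η * (η * (s ⬝ᵥ Q *ᵥ s)) = 2 * (s ⬝ᵥ Q *ᵥ s) by field_simp]
  constructor <;> intro h <;> linarith

end Matrix

theorem stmt_18_general {I : ℕ} (Q : Matrix (Fin I) (Fin I) ℝ) (p : Fin I → ℝ)
    (N : ℕ)
    (Z : Matrix (Fin I) (Fin I) ℝ) (hZdef : Z = -(Q + Qᵀ)) (hZ : Z.IsHermitian)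
    (lam : ℝ) (hlam : IsLeast (Set.range hZ.eigenvalues) lam)
    (η : ℝ) (hη : 0 < η) :
    (∀ s : Fin I → ℝ, (∀ i, s i = 0 ∨ s i = 1) → ∑ i, s i = (N : ℝ) →
        0 < s ⬝ᵥ (Q *ᵥ s) →
        ((s ⬝ᵥ p) / (s ⬝ᵥ (Q *ᵥ s)) ≤ η ↔
          s ⬝ᵥ ((Z - lam • (1 : Matrix (Fin I) (Fin I) ℝ)) *ᵥ s)
            + (2 / η) * (s ⬝ᵥ p) + lam * N ≤ 0)) ∧
      ConvexOn ℝ Set.univ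
        (fun s : Fin I → ℝ =>
          s ⬝ᵥ ((Z - lam • (1 : Matrix (Fin I) (Fin I) ℝ)) *ᵥ s) + (2 / η) * (s ⬝ᵥ p)) := by
  refine ⟨fun s hs hsum hQs ↦ ?_, ?_⟩
  · rw [hZdef, ← hsum]
    exact div_dotProduct_mulVec_le_iff hs hQs lam hη
  · have hpsd : (Z - lam • 1).PosSemidef :=
      (hZ.posSemidef_sub_smul_one_iff lam).2 fun i ↦ hlam.2 ⟨i, rfl⟩
    exact hpsd.convexOn_dotProduct_mulVec.add
      (((2 / η) • (dotProductBilin ℝ ℝ).flip p).convexOn convex_univ)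

theorem stmt_18 {I : ℕ} (Q : Matrix (Fin I) (Fin I) ℝ) (p : Fin I → ℝ)
    (N : ℕ) (hN : 1 ≤ N)
    (Z : Matrix (Fin I) (Fin I) ℝ) (hZdef : Z = -(Q + Qᵀ)) (hZ : Z.IsHermitian)
    (lam : ℝ) (hlam : IsLeast (Set.range hZ.eigenvalues) lam)
    (η : ℝ) (hη : 0 < η) :
    (∀ s : Fin I → ℝ, (∀ i, s i = 0 ∨ s i = 1) → ∑ i, s i = (N : ℝ) →
        0 < s ⬝ᵥ (Q *ᵥ s) →
        ((s ⬝ᵥ p) / (s ⬝ᵥ (Q *ᵥ s)) ≤ η ↔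
          s ⬝ᵥ ((Z - lam • (1 : Matrix (Fin I) (Fin I) ℝ)) *ᵥ s)
            + (2 / η) * (s ⬝ᵥ p) + lam * N ≤ 0)) ∧
      ConvexOn ℝ Set.univ
        (fun s : Fin I → ℝ =>
          s ⬝ᵥ ((Z - lam • (1 : Matrix (Fin I) (Fin I) ℝ)) *ᵥ s) + (2 / η) * (s ⬝ᵥ p)) :=
  stmt_18_general Q p N Z hZdef hZ lam hlam η hη
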